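/- arXiv:math/0302300 — 4 statements merged into one kernel-verified Lean document; each statement's English description precedes it below -/
import Mathlib

section
/- For g, h in Thompson's group T, define gv(g,h) = Σ_{x∈𝕋} ( log₂ h'_r(x) · Δlog₂ (g∘h)'_r(x) − Δlog₂ h'_r(x) · log₂ (g∘h)'_r(x) ). Then for each g, h the summand vanishes for all but finitely many x ∈ 𝕋, so gv(g,h) is a well-defined integer; and gv : T × T → ℤ is a 2-cocycle for the trivial action of T on ℤ, i.e. for all g, h, k ∈ T one has gv(h,k) − gv(g∘h, k) + gv(g, h∘k) − gv(g,h) = 0. -/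
noncomputable section
open Classical

/-- The circle `𝕋 = ℝ/ℤ`. -/
abbrev Circle𝕋 := AddCircle (1 : ℝ)

/-- A real number is dyadic if it belongs to `ℤ[1/2]`. -/
def IsDyadic (x : ℝ) : Prop := ∃ (p : ℤ) (n : ℕ), x = (p : ℝ) / 2 ^ n

/-- `φ : ℝ → ℝ` is a lift of a piecewise dyadic affine homeomorphism of the circle. -/
def IsPDALift (φ : ℝ → ℝ) : Prop :=
  StrictMono φ ∧ Function.Surjective φ ∧ (∀ x : ℝ, φ (x + 1) = φ x + 1) ∧
  IsDyadic (φ 0) ∧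
  ∃ B : Finset ℝ, (↑B : Set ℝ) ⊆ Set.Ico (0 : ℝ) 1 ∧ (∀ b ∈ B, IsDyadic b) ∧
    ∀ u v : ℝ, u < v → (∀ c ∈ B, ∀ k : ℤ, c + (k : ℝ) ∉ Set.Ioo u v) →
      ∃ n : ℤ, ∀ x ∈ Set.Ioo u v, ∀ y ∈ Set.Ioo u v, φ x - φ y = (2 : ℝ) ^ n * (x - y)

/-- A homeomorphism of the circle is piecewise dyadic affine if it admits a suitable lift. -/
def IsPDA (g : Homeomorph Circle𝕋 Circle𝕋) : Prop :=
  ∃ φ : ℝ → ℝ, IsPDALift φ ∧ ∀ x : ℝ, g ((x : ℝ) : Circle𝕋) = ((φ x : ℝ) : Circle𝕋)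

/-- The right derivative of `g` at `x ∈ 𝕋` equals `2 ^ n`: some lift `φ` of `g` is affine
with slope `2 ^ n` on a small interval to the right of a representative `r` of `x`. -/
def HasRightSlope (g : Homeomorph Circle𝕋 Circle𝕋) (x : Circle𝕋) (n : ℤ) : Prop :=
  ∃ (r : ℝ) (φ : ℝ → ℝ), IsPDALift φ ∧ (∀ y : ℝ, g ((y : ℝ) : Circle𝕋) = ((φ y : ℝ) : Circle𝕋)) ∧
    ((r : ℝ) : Circle𝕋) = x ∧
    ∃ ε > (0 : ℝ), ∀ y ∈ Set.Icc r (r + ε), φ y = φ r + (2 : ℝ) ^ n * (y - r)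

/-- The left derivative of `g` at `x ∈ 𝕋` equals `2 ^ n`. -/
def HasLeftSlope (g : Homeomorph Circle𝕋 Circle𝕋) (x : Circle𝕋) (n : ℤ) : Prop :=
  ∃ (r : ℝ) (φ : ℝ → ℝ), IsPDALift φ ∧ (∀ y : ℝ, g ((y : ℝ) : Circle𝕋) = ((φ y : ℝ) : Circle𝕋)) ∧
    ((r : ℝ) : Circle𝕋) = x ∧
    ∃ ε > (0 : ℝ), ∀ y ∈ Set.Icc (r - ε) r, φ y = φ r + (2 : ℝ) ^ n * (y - r)

/-- `log₂ g'_r(x)`: the base-2 logarithm of the right derivative of `g` at `x`. -/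
noncomputable def logRightDeriv (g : Homeomorph Circle𝕋 Circle𝕋) (x : Circle𝕋) : ℤ :=
  if h : ∃ n : ℤ, HasRightSlope g x n then h.choose else 0

/-- `log₂ g'_l(x)`: the base-2 logarithm of the left derivative of `g` at `x`. -/
noncomputable def logLeftDeriv (g : Homeomorph Circle𝕋 Circle𝕋) (x : Circle𝕋) : ℤ :=
  if h : ∃ n : ℤ, HasLeftSlope g x n then h.choose else 0

/-- `Δlog₂ g'_r(x) = log₂ g'_r(x) − log₂ g'_l(x)`. -/
noncomputable def deltaLog (g : Homeomorph Circle𝕋 Circle𝕋) (x : Circle𝕋) : ℤ :=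
  logRightDeriv g x - logLeftDeriv g x

/-- The summand of the Ghys–Sergiescu cocycle:
`log₂ h'_r(x) · Δlog₂ (g∘h)'_r(x) − Δlog₂ h'_r(x) · log₂ (g∘h)'_r(x)`.
(Here `h.trans g` is the composition `g ∘ h`.) -/
noncomputable def gvSummand (g h : Homeomorph Circle𝕋 Circle𝕋) (x : Circle𝕋) : ℤ :=
  logRightDeriv h x * deltaLog (h.trans g) x - deltaLog h x * logRightDeriv (h.trans g) x

/-- `gv(g,h) = Σ_{x∈𝕋} (log₂ h'_r(x) · Δlog₂ (g∘h)'_r(x) − Δlog₂ h'_r(x) · log₂ (g∘h)'_r(x))`. -/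
noncomputable def gv (g h : Homeomorph Circle𝕋 Circle𝕋) : ℤ :=
  ∑ᶠ x : Circle𝕋, gvSummand g h x

/-!
The chain rule for one-sided derivatives of lifts gives `log₂ (g ∘ h)'(x) = log₂ g'(h x) +
log₂ h'(x)` on either side, so `Δlog₂` is additive in the same way, and `Δlog₂ g'` vanishes off
the finitely many breakpoints of `g`. Substituting this into the summands, the cocycle identity
holds pointwise once the sum defining `gv(g,h)` is reindexed by `x ↦ k x`.

The substantial input is that `T` is closed under composition, so that these formulas apply to
`g ∘ h`. The new breakpoints of a composite are preimages of dyadic rationals under a lift in `T`.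
Such a lift maps dyadic points to dyadic points (by induction over the breakpoints between `0` and
the point), and off its breakpoints it is locally affine with slope a power of `2`, so only dyadic
points are mapped to dyadic rationals.
-/

open Set Filter Topology Function

theorem IsDyadic.add {x y : ℝ} (hx : IsDyadic x) (hy : IsDyadic y) : IsDyadic (x + y) := by
  obtain ⟨p, a, rfl⟩ := hx
  obtain ⟨q, b, rfl⟩ := hy
  exact ⟨p * 2 ^ b + q * 2 ^ a, a + b, by push_cast; rw [pow_add]; field_simp⟩

theorem IsDyadic.neg {x : ℝ} (hx : IsDyadic x) : IsDyadic (-x) := by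
  obtain ⟨p, a, rfl⟩ := hx
  exact ⟨-p, a, by push_cast; ring⟩

theorem IsDyadic.sub {x y : ℝ} (hx : IsDyadic x) (hy : IsDyadic y) : IsDyadic (x - y) := by
  simpa only [sub_eq_add_neg] using hx.add hy.neg

theorem isDyadic_intCast (k : ℤ) : IsDyadic k := ⟨k, 0, by simp⟩

theorem IsDyadic.zpow_mul {x : ℝ} (hx : IsDyadic x) (n : ℤ) : IsDyadic (2 ^ n * x) := by
  obtain ⟨p, a, rfl⟩ := hx
  obtain ⟨m, rfl | rfl⟩ := n.eq_nat_or_neg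
  · exact ⟨p * 2 ^ m, a, by push_cast; rw [zpow_natCast]; ring⟩
  · exact ⟨p, a + m, by rw [zpow_neg, zpow_natCast, pow_add]; field_simp⟩

theorem IsDyadic.add_right_iff {x d : ℝ} (hd : IsDyadic d) : IsDyadic (x + d) ↔ IsDyadic x :=
  ⟨fun h => by simpa using h.sub hd, fun h => h.add hd⟩

theorem exists_isDyadic_mem_Ioo {u v : ℝ} (huv : u < v) : ∃ d, IsDyadic d ∧ d ∈ Ioo u v := by
  obtain ⟨N, hN⟩ := exists_pow_lt_of_lt_one (sub_pos.mpr huv) (by norm_num : (1 / 2 : ℝ) < 1)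
  have h2N : (0 : ℝ) < 2 ^ N := by positivity
  have hgap : 1 < (v - u) * 2 ^ N := by
    rwa [one_div_pow, div_lt_iff₀ h2N] at hN
  refine ⟨(⌊u * 2 ^ N⌋ + 1) / 2 ^ N, ⟨⌊u * 2 ^ N⌋ + 1, N, by push_cast; ring⟩, ?_, ?_⟩
  · rw [lt_div_iff₀ h2N]
    exact_mod_cast Int.lt_floor_add_one (u * 2 ^ N)
  · rw [div_lt_iff₀ h2N]
    linarith [Int.floor_le (u * 2 ^ N)]

theorem exists_int_eq_add_of_coe_eq {a b : ℝ} (h : (a : Circle𝕋) = b) : ∃ k : ℤ, a = b + k := by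
  obtain ⟨k, hk⟩ := AddSubgroup.mem_zmultiples_iff.mp (QuotientAddGroup.eq_iff_sub_mem.mp h)
  exact ⟨k, by rw [zsmul_one] at hk; linarith⟩

theorem coe_add_intCast (a : ℝ) (k : ℤ) : ((a + k : ℝ) : Circle𝕋) = a := by
  rw [AddCircle.coe_add, add_eq_left, AddCircle.coe_eq_zero_iff]
  exact ⟨k, zsmul_one _⟩

theorem sub_eq_sub_of_coe_eq {φ ψ : ℝ → ℝ} (hφ : Continuous φ) (hψ : Continuous ψ)
    (h : ∀ y, (φ y : Circle𝕋) = ψ y) (a b : ℝ) : ψ a - φ a = ψ b - φ b :=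
  isPreconnected_univ.constant_of_mapsTo (T := (AddSubgroup.zmultiples (1 : ℝ) : Set ℝ))
    (isDiscrete_iff_discreteTopology.mpr
      (inferInstance : DiscreteTopology (AddSubgroup.zmultiples (1 : ℝ)))) (hψ.sub hφ).continuousOn
    (fun y _ => QuotientAddGroup.eq_iff_sub_mem.mp (h y).symm) trivial trivial

theorem IsPDALift.continuous {φ : ℝ → ℝ} (hφ : IsPDALift φ) : Continuous φ :=
  hφ.1.monotone.continuous_of_surjective hφ.2.1

theorem IsPDALift.map_add_int {φ : ℝ → ℝ} (hφ : IsPDALift φ) (x : ℝ) (k : ℤ) :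
    φ (x + k) = φ x + k :=
  AddConstMapClass.map_add_int (⟨φ, hφ.2.2.1⟩ : AddConstMap ℝ ℝ 1 1) x k

def AffineOn (φ : ℝ → ℝ) (n : ℤ) (s : Set ℝ) : Prop :=
  ∀ x ∈ s, ∀ y ∈ s, φ x - φ y = 2 ^ n * (x - y)

theorem AffineOn.mono {φ : ℝ → ℝ} {n : ℤ} {s t : Set ℝ} (h : AffineOn φ n t) (hst : s ⊆ t) :
    AffineOn φ n s :=
  fun x hx y hy => h x (hst hx) y (hst hy)

theorem AffineOn.eq_add {φ : ℝ → ℝ} {n : ℤ} {s : Set ℝ} {r : ℝ} (h : AffineOn φ n s) (hr : r ∈ s)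
    {y : ℝ} (hy : y ∈ s) : φ y = φ r + 2 ^ n * (y - r) := by
  linarith [h y hy r hr]

theorem AffineOn.Icc_of_Ioo {φ : ℝ → ℝ} {n : ℤ} {u v : ℝ} (hφ : Continuous φ) (huv : u < v)
    (h : AffineOn φ n (Ioo u v)) : AffineOn φ n (Icc u v) := by
  obtain ⟨m, hm⟩ := nonempty_Ioo.mpr huv
  have hEq : EqOn φ (fun x => φ m + 2 ^ n * (x - m)) (Ioo u v) := fun x hx => by
    linarith [h x hx m hm]
  have hcl := hEq.closure hφ (by fun_prop)
  rw [closure_Ioo huv.ne] at hcl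
  intro x hx y hy
  rw [hcl hx, hcl hy]
  ring

theorem AffineOn.comp {φ ψ : ℝ → ℝ} {m n : ℤ} {s t : Set ℝ} (hψ : AffineOn ψ m t)
    (hφ : AffineOn φ n s) (hst : MapsTo φ s t) : AffineOn (ψ ∘ φ) (m + n) s := by
  intro x hx y hy
  rw [comp_apply, comp_apply, hψ _ (hst hx) _ (hst hy), hφ x hx y hy, zpow_add₀ two_ne_zero,
    mul_assoc]

def intTranslates (B : Finset ℝ) : Set ℝ := {x | ∃ c ∈ B, ∃ k : ℤ, c + k = x}

theorem disjoint_intTranslates_iff {B : Finset ℝ} {s : Set ℝ} :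
    Disjoint (intTranslates B) s ↔ ∀ c ∈ B, ∀ k : ℤ, c + (k : ℝ) ∉ s := by
  simp only [Set.disjoint_left, intTranslates]
  grind

theorem intTranslates_mono {B B' : Finset ℝ} (h : B ⊆ B') : intTranslates B ⊆ intTranslates B' :=
  fun _ ⟨c, hc, k, hck⟩ => ⟨c, h hc, k, hck⟩

theorem IsDyadic.of_mem_intTranslates {B : Finset ℝ} (hB : ∀ b ∈ B, IsDyadic b) {x : ℝ}
    (hx : x ∈ intTranslates B) : IsDyadic x := by
  obtain ⟨c, hc, k, rfl⟩ := hx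
  exact (hB c hc).add (isDyadic_intCast k)

theorem finite_intTranslates_inter_Icc (B : Finset ℝ) (u v : ℝ) :
    (intTranslates B ∩ Icc u v).Finite := by
  refine (B.finite_toSet.biUnion fun c _ =>
    (Set.finite_Icc ⌈u - c⌉ ⌊v - c⌋).image fun k : ℤ => c + (k : ℝ)).subset ?_
  rintro _ ⟨⟨c, hc, k, rfl⟩, hu, hv⟩
  exact mem_biUnion hc ⟨k, ⟨Int.ceil_le.2 (by linarith), Int.le_floor.2 (by linarith)⟩, rfl⟩

theorem exists_intTranslates_inter_Ioo_subset (B : Finset ℝ) (r : ℝ) :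
    ∃ ε > 0, intTranslates B ∩ Ioo (r - ε) (r + ε) ⊆ {r} := by
  have hfin := (finite_intTranslates_inter_Icc B (r - 1) (r + 1)).sdiff (t := {r})
  have hnhds : ((intTranslates B ∩ Icc (r - 1) (r + 1)) \ {r})ᶜ ∩ Ioo (r - 1) (r + 1) ∈ 𝓝 r :=
    inter_mem (hfin.isClosed.isOpen_compl.mem_nhds (by simp))
      (Ioo_mem_nhds (by linarith) (by linarith))
  obtain ⟨ε, hε, hball⟩ := Metric.mem_nhds_iff.mp hnhds
  refine ⟨ε, hε, fun x ⟨hxB, hx⟩ => ?_⟩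
  rw [← Real.ball_eq_Ioo] at hx
  obtain ⟨hxF, hx1⟩ := hball hx
  by_contra hxr
  exact hxF ⟨⟨hxB, Ioo_subset_Icc_self hx1⟩, hxr⟩

def IsBreakpointSet (φ : ℝ → ℝ) (B : Finset ℝ) : Prop :=
  ∀ u v, u < v → Disjoint (intTranslates B) (Ioo u v) → ∃ n, AffineOn φ n (Icc u v)

theorem IsPDALift.exists_isBreakpointSet {φ : ℝ → ℝ} (hφ : IsPDALift φ) :
    ∃ B : Finset ℝ, (↑B : Set ℝ) ⊆ Ico 0 1 ∧ (∀ b ∈ B, IsDyadic b) ∧ IsBreakpointSet φ B := by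
  obtain ⟨B, hB01, hBd, hB⟩ := hφ.2.2.2.2
  refine ⟨B, hB01, hBd, fun u v huv hfree => ?_⟩
  obtain ⟨n, hn⟩ := hB u v huv (disjoint_intTranslates_iff.mp hfree)
  exact ⟨n, AffineOn.Icc_of_Ioo hφ.continuous huv hn⟩

section IsBreakpointSet

variable {φ : ℝ → ℝ} {B : Finset ℝ}

theorem IsBreakpointSet.exists_affineOn_right (hB : IsBreakpointSet φ B) (r : ℝ) :
    ∃ ε > 0, ∃ n, AffineOn φ n (Icc r (r + ε)) := by
  obtain ⟨ε, hε, hsub⟩ := exists_intTranslates_inter_Ioo_subset B r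
  refine ⟨ε, hε, hB r (r + ε) (by linarith) (Set.disjoint_left.mpr fun x hxB hx => ?_)⟩
  exact hx.1.ne' (hsub ⟨hxB, by linarith [hx.1], hx.2⟩)

theorem IsBreakpointSet.exists_affineOn_left (hB : IsBreakpointSet φ B) (r : ℝ) :
    ∃ ε > 0, ∃ n, AffineOn φ n (Icc (r - ε) r) := by
  obtain ⟨ε, hε, hsub⟩ := exists_intTranslates_inter_Ioo_subset B r
  refine ⟨ε, hε, hB (r - ε) r (by linarith) (Set.disjoint_left.mpr fun x hxB hx => ?_)⟩
  exact hx.2.ne (hsub ⟨hxB, hx.1, by linarith [hx.2]⟩)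

theorem IsBreakpointSet.exists_affineOn_of_notMem (hB : IsBreakpointSet φ B) {r : ℝ}
    (hr : r ∉ intTranslates B) : ∃ ε > 0, ∃ n, AffineOn φ n (Icc (r - ε) (r + ε)) := by
  obtain ⟨ε, hε, hsub⟩ := exists_intTranslates_inter_Ioo_subset B r
  refine ⟨ε, hε, hB (r - ε) (r + ε) (by linarith) (Set.disjoint_left.mpr fun x hxB hx => ?_)⟩
  obtain rfl : x = r := hsub ⟨hxB, hx⟩
  exact hr hxB

theorem IsBreakpointSet.isDyadic_map_iff_of_subset (hB : IsBreakpointSet φ B) {S : Finset ℝ}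
    (hS : ∀ a ∈ S, IsDyadic a) {u v : ℝ} (huv : u ≤ v) (hu : IsDyadic u) (hv : IsDyadic v)
    (hBS : intTranslates B ∩ Ioo u v ⊆ S) : IsDyadic (φ u) ↔ IsDyadic (φ v) := by
  induction S using Finset.induction_on generalizing u v with
  | empty =>
    rcases huv.eq_or_lt with rfl | huv
    · rfl
    obtain ⟨n, hn⟩ := hB u v huv (Set.disjoint_iff_inter_eq_empty.mpr (by simpa using hBS))
    rw [hn.eq_add (left_mem_Icc.2 huv.le) (right_mem_Icc.2 huv.le),
      ((hv.sub hu).zpow_mul n).add_right_iff]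
  | insert a s _ ih =>
    have hs : ∀ b ∈ s, IsDyadic b := fun b hb => hS b (Finset.mem_insert_of_mem hb)
    have hsub : ∀ {u' v'}, u ≤ u' → v' ≤ v → a ∉ Ioo u' v' → intTranslates B ∩ Ioo u' v' ⊆ s :=
      fun hu' hv' ha x ⟨hxB, hx⟩ => by
        have := hBS ⟨hxB, hu'.trans_lt hx.1, hx.2.trans_le hv'⟩
        rw [Finset.coe_insert, mem_insert_iff] at this
        exact this.resolve_left fun hxa => ha (hxa ▸ hx)
    by_cases hav : a ∈ Ioo u v
    · have ha := hS a (Finset.mem_insert_self a s)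
      exact (ih hs hav.1.le hu ha (hsub le_rfl hav.2.le (by simp))).trans
        (ih hs hav.2.le ha hv (hsub hav.1.le le_rfl (by simp)))
    · exact ih hs huv hu hv (hsub le_rfl le_rfl hav)

theorem IsBreakpointSet.isDyadic_map_iff (hB : IsBreakpointSet φ B)
    (hBd : ∀ b ∈ B, IsDyadic b) {u v : ℝ} (huv : u ≤ v) (hu : IsDyadic u) (hv : IsDyadic v) :
    IsDyadic (φ u) ↔ IsDyadic (φ v) := by
  have hfin := finite_intTranslates_inter_Icc B u v
  refine hB.isDyadic_map_iff_of_subset (S := hfin.toFinset)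
    (fun a ha => .of_mem_intTranslates hBd (hfin.mem_toFinset.mp ha).1) huv hu hv ?_
  exact fun x ⟨hxB, hx⟩ => hfin.mem_toFinset.mpr ⟨hxB, Ioo_subset_Icc_self hx⟩

end IsBreakpointSet

section IsPDALift

variable {φ ψ : ℝ → ℝ}

theorem IsPDALift.isDyadic_map (hφ : IsPDALift φ) {x : ℝ} (hx : IsDyadic x) :
    IsDyadic (φ x) := by
  obtain ⟨B, -, hBd, hB⟩ := hφ.exists_isBreakpointSet
  have h0 : IsDyadic 0 := ⟨0, 0, by simp⟩
  rcases le_total 0 x with h | h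
  · exact (hB.isDyadic_map_iff hBd h h0 hx).mp hφ.2.2.2.1
  · exact (hB.isDyadic_map_iff hBd h hx h0).mpr hφ.2.2.2.1

theorem IsPDALift.isDyadic_of_isDyadic_map (hφ : IsPDALift φ) {x : ℝ} (hx : IsDyadic (φ x)) :
    IsDyadic x := by
  obtain ⟨B, -, hBd, hB⟩ := hφ.exists_isBreakpointSet
  by_cases hxB : x ∈ intTranslates B
  · exact .of_mem_intTranslates hBd hxB
  obtain ⟨ε, hε, n, hn⟩ := hB.exists_affineOn_of_notMem hxB
  obtain ⟨d, hd, hdx⟩ := exists_isDyadic_mem_Ioo (show x - ε < x by linarith)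
  have hxd : x = d + 2 ^ (-n) * (φ x - φ d) := by
    rw [hn x ⟨by linarith, by linarith⟩ d ⟨hdx.1.le, by linarith [hdx.2]⟩, ← mul_assoc,
      ← zpow_add₀ two_ne_zero, neg_add_cancel, zpow_zero, one_mul, add_sub_cancel]
  rw [hxd]
  exact hd.add ((hx.sub (hφ.isDyadic_map hd)).zpow_mul (-n))

/-- The breakpoints of `ψ ∘ φ` are those of `φ` together with the `φ`-preimages of those of `ψ`,
reduced mod `1`. -/
theorem IsPDALift.comp (hψ : IsPDALift ψ) (hφ : IsPDALift φ) : IsPDALift (ψ ∘ φ) := by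
  obtain ⟨Bφ, hBφ01, hBφd, hBφ⟩ := hφ.exists_isBreakpointSet
  obtain ⟨Bψ, -, hBψd, hBψ⟩ := hψ.exists_isBreakpointSet
  set pre := surjInv hφ.2.1
  refine ⟨hψ.1.comp hφ.1, hψ.2.1.comp hφ.2.1, fun x => ?_, hψ.isDyadic_map hφ.2.2.2.1,
    Bφ ∪ Bψ.image (Int.fract ∘ pre), ?_, ?_, fun u v huv hfree => ?_⟩
  · rw [comp_apply, comp_apply, hφ.2.2.1, hψ.2.2.1]
  · intro x hx
    obtain hx | ⟨b, -, rfl⟩ := Finset.mem_union.mp hx |>.imp_right Finset.mem_image.mp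
    · exact hBφ01 hx
    · exact ⟨Int.fract_nonneg _, Int.fract_lt_one _⟩
  · intro x hx
    obtain hx | ⟨b, hb, rfl⟩ := Finset.mem_union.mp hx |>.imp_right Finset.mem_image.mp
    · exact hBφd x hx
    · have hpre : IsDyadic (pre b) :=
        hφ.isDyadic_of_isDyadic_map (by rw [surjInv_eq hφ.2.1 b]; exact hBψd b hb)
      exact hpre.sub (isDyadic_intCast _)
  · rw [← disjoint_intTranslates_iff] at hfree
    obtain ⟨n, hn⟩ := hBφ u v huv (hfree.mono_left (intTranslates_mono Finset.subset_union_left))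
    have hfreeψ : Disjoint (intTranslates Bψ) (Ioo (φ u) (φ v)) := by
      refine Set.disjoint_left.mpr ?_
      rintro _ ⟨b, hb, k, rfl⟩ ⟨hu, hv⟩
      have hφb : φ (pre b + k) = b + k := by rw [hφ.map_add_int, surjInv_eq hφ.2.1 b]
      rw [← hφb] at hu hv
      refine Set.disjoint_left.mp hfree ⟨Int.fract (pre b), ?_, ⌊pre b⌋ + k, ?_⟩
        ⟨hφ.1.lt_iff_lt.mp hu, hφ.1.lt_iff_lt.mp hv⟩
      · exact Finset.mem_union_right _ (Finset.mem_image_of_mem _ hb)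
      · push_cast
        rw [← add_assoc, Int.fract_add_floor]
    obtain ⟨m, hm⟩ := hBψ (φ u) (φ v) (hφ.1 huv) hfreeψ
    exact ⟨m + n, (hm.comp hn fun x hx => ⟨hφ.1.monotone hx.1, hφ.1.monotone hx.2⟩).mono
      Ioo_subset_Icc_self⟩

end IsPDALift

def IsLift (g : Circle𝕋 → Circle𝕋) (φ : ℝ → ℝ) : Prop := ∀ y : ℝ, g y = φ y

theorem IsLift.comp {g h : Circle𝕋 → Circle𝕋} {φ ψ : ℝ → ℝ} (hψ : IsLift g ψ) (hφ : IsLift h φ) :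
    IsLift (g ∘ h) (ψ ∘ φ) :=
  fun y => by rw [comp_apply, hφ, hψ, comp_apply]

theorem IsPDA.trans {g h : Homeomorph Circle𝕋 Circle𝕋} (hh : IsPDA h) (hg : IsPDA g) :
    IsPDA (h.trans g) := by
  obtain ⟨φ, hφ, hφh : IsLift h φ⟩ := hh
  obtain ⟨ψ, hψ, hψg : IsLift g ψ⟩ := hg
  exact ⟨ψ ∘ φ, hψ.comp hφ, hψg.comp hφh⟩

theorem IsLift.add_sub_eq {g : Circle𝕋 → Circle𝕋} {φ ψ : ℝ → ℝ} (hφ : IsPDALift φ)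
    (hφg : IsLift g φ) (hψ : Continuous ψ) (hψg : IsLift g ψ) {r r₀ : ℝ}
    (hr : (r : Circle𝕋) = r₀) (t : ℝ) : ψ (r₀ + t) - ψ r₀ = φ (r + t) - φ r := by
  obtain ⟨k, rfl⟩ := exists_int_eq_add_of_coe_eq hr.symm
  have hconst := sub_eq_sub_of_coe_eq hφ.continuous hψ (fun y => (hφg y).symm.trans (hψg y))
    (r + k + t) (r + k)
  have hshift := hφ.map_add_int (r + t) k
  rw [add_right_comm] at hshift
  linarith [hφ.map_add_int r k]

theorem hasDerivWithinAt_of_eq_affine {φ : ℝ → ℝ} {s t : Set ℝ} {r a : ℝ} (hs : s ∈ 𝓝[t] r)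
    (h : ∀ y ∈ s, φ y = φ r + a * (y - r)) : HasDerivWithinAt φ a t r := by
  have hline : HasDerivAt (fun y => φ r + a * (y - r)) a r := by
    simpa using (((hasDerivAt_id r).sub_const r).const_mul a).const_add (φ r)
  exact hline.hasDerivWithinAt.congr_of_eventuallyEq (eventually_of_mem hs h) (by simp)

section Slopes

variable {g h : Homeomorph Circle𝕋 Circle𝕋} {x : Circle𝕋} {ψ : ℝ → ℝ} {r : ℝ}

theorem HasRightSlope.hasDerivWithinAt {n : ℤ} (hs : HasRightSlope g x n) (hψ : Continuous ψ)
    (hψg : IsLift g ψ) (hr : (r : Circle𝕋) = x) : HasDerivWithinAt ψ (2 ^ n) (Ici r) r := by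
  obtain ⟨r₁, φ, hφ, hφg, rfl, ε, hε, haff⟩ := hs
  refine hasDerivWithinAt_of_eq_affine (Icc_mem_nhdsGE (lt_add_of_pos_right r hε)) fun y hy => ?_
  have hφy := haff (r₁ + (y - r)) ⟨by linarith [hy.1], by linarith [hy.2]⟩
  have hψy := IsLift.add_sub_eq hφ hφg hψ hψg hr.symm (y - r)
  rw [add_sub_cancel, hφy, add_sub_cancel_left] at hψy
  linarith

theorem HasLeftSlope.hasDerivWithinAt {n : ℤ} (hs : HasLeftSlope g x n) (hψ : Continuous ψ)
    (hψg : IsLift g ψ) (hr : (r : Circle𝕋) = x) : HasDerivWithinAt ψ (2 ^ n) (Iic r) r := by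
  obtain ⟨r₁, φ, hφ, hφg, rfl, ε, hε, haff⟩ := hs
  refine hasDerivWithinAt_of_eq_affine (Icc_mem_nhdsLE (sub_lt_self r hε)) fun y hy => ?_
  have hφy := haff (r₁ + (y - r)) ⟨by linarith [hy.1], by linarith [hy.2]⟩
  have hψy := IsLift.add_sub_eq hφ hφg hψ hψg hr.symm (y - r)
  rw [add_sub_cancel, hφy, add_sub_cancel_left] at hψy
  linarith

theorem IsPDA.exists_hasRightSlope (hg : IsPDA g) (x : Circle𝕋) : ∃ n, HasRightSlope g x n := by
  obtain ⟨φ, hφ, hφg⟩ := hg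
  obtain ⟨B, -, -, hB⟩ := hφ.exists_isBreakpointSet
  obtain ⟨r, rfl⟩ := QuotientAddGroup.mk_surjective x
  obtain ⟨ε, hε, n, hn⟩ := hB.exists_affineOn_right r
  exact ⟨n, r, φ, hφ, hφg, rfl, ε, hε, fun y hy => hn.eq_add (left_mem_Icc.2 (by linarith)) hy⟩

theorem IsPDA.exists_hasLeftSlope (hg : IsPDA g) (x : Circle𝕋) : ∃ n, HasLeftSlope g x n := by
  obtain ⟨φ, hφ, hφg⟩ := hg
  obtain ⟨B, -, -, hB⟩ := hφ.exists_isBreakpointSet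
  obtain ⟨r, rfl⟩ := QuotientAddGroup.mk_surjective x
  obtain ⟨ε, hε, n, hn⟩ := hB.exists_affineOn_left r
  exact ⟨n, r, φ, hφ, hφg, rfl, ε, hε, fun y hy => hn.eq_add (right_mem_Icc.2 (by linarith)) hy⟩

theorem IsPDA.hasDerivWithinAt_logRightDeriv (hg : IsPDA g) (hψ : Continuous ψ)
    (hψg : IsLift g ψ) (hr : (r : Circle𝕋) = x) :
    HasDerivWithinAt ψ (2 ^ logRightDeriv g x) (Ici r) r := by
  have hs := hg.exists_hasRightSlope x
  rw [logRightDeriv, dif_pos hs]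
  exact hs.choose_spec.hasDerivWithinAt hψ hψg hr

theorem IsPDA.hasDerivWithinAt_logLeftDeriv (hg : IsPDA g) (hψ : Continuous ψ)
    (hψg : IsLift g ψ) (hr : (r : Circle𝕋) = x) :
    HasDerivWithinAt ψ (2 ^ logLeftDeriv g x) (Iic r) r := by
  have hs := hg.exists_hasLeftSlope x
  rw [logLeftDeriv, dif_pos hs]
  exact hs.choose_spec.hasDerivWithinAt hψ hψg hr

theorem IsPDA.logRightDeriv_eq {n : ℤ} (hg : IsPDA g) (hψ : Continuous ψ) (hψg : IsLift g ψ)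
    (hr : (r : Circle𝕋) = x) (hd : HasDerivWithinAt ψ (2 ^ n) (Ici r) r) :
    logRightDeriv g x = n :=
  zpow_right_injective₀ two_pos (by norm_num) <|
    (uniqueDiffWithinAt_Ici r).eq_deriv _ (hg.hasDerivWithinAt_logRightDeriv hψ hψg hr) hd

theorem IsPDA.logLeftDeriv_eq {n : ℤ} (hg : IsPDA g) (hψ : Continuous ψ) (hψg : IsLift g ψ)
    (hr : (r : Circle𝕋) = x) (hd : HasDerivWithinAt ψ (2 ^ n) (Iic r) r) :
    logLeftDeriv g x = n :=
  zpow_right_injective₀ two_pos (by norm_num) <|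
    (uniqueDiffWithinAt_Iic r).eq_deriv _ (hg.hasDerivWithinAt_logLeftDeriv hψ hψg hr) hd

theorem logRightDeriv_trans (hh : IsPDA h) (hg : IsPDA g) (x : Circle𝕋) :
    logRightDeriv (h.trans g) x = logRightDeriv g (h x) + logRightDeriv h x := by
  obtain ⟨φ, hφ, hφh : IsLift h φ⟩ := id hh
  obtain ⟨ψ, hψ, hψg : IsLift g ψ⟩ := id hg
  obtain ⟨r, rfl⟩ := QuotientAddGroup.mk_surjective x
  refine (hh.trans hg).logRightDeriv_eq (hψ.continuous.comp hφ.continuous)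
    (hψg.comp hφh) rfl ?_
  rw [zpow_add₀ two_ne_zero]
  exact (hg.hasDerivWithinAt_logRightDeriv hψ.continuous hψg (hφh r).symm).comp r
    (hh.hasDerivWithinAt_logRightDeriv hφ.continuous hφh rfl) fun y hy => hφ.1.monotone hy

theorem logLeftDeriv_trans (hh : IsPDA h) (hg : IsPDA g) (x : Circle𝕋) :
    logLeftDeriv (h.trans g) x = logLeftDeriv g (h x) + logLeftDeriv h x := by
  obtain ⟨φ, hφ, hφh : IsLift h φ⟩ := id hh
  obtain ⟨ψ, hψ, hψg : IsLift g ψ⟩ := id hg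
  obtain ⟨r, rfl⟩ := QuotientAddGroup.mk_surjective x
  refine (hh.trans hg).logLeftDeriv_eq (hψ.continuous.comp hφ.continuous)
    (hψg.comp hφh) rfl ?_
  rw [zpow_add₀ two_ne_zero]
  exact (hg.hasDerivWithinAt_logLeftDeriv hψ.continuous hψg (hφh r).symm).comp r
    (hh.hasDerivWithinAt_logLeftDeriv hφ.continuous hφh rfl) fun y hy => hφ.1.monotone hy

theorem deltaLog_trans (hh : IsPDA h) (hg : IsPDA g) (x : Circle𝕋) :
    deltaLog (h.trans g) x = deltaLog g (h x) + deltaLog h x := by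
  rw [deltaLog, deltaLog, deltaLog, logRightDeriv_trans hh hg, logLeftDeriv_trans hh hg]
  ring

theorem IsPDA.hasFiniteSupport_deltaLog (hg : IsPDA g) : (deltaLog g).HasFiniteSupport := by
  obtain ⟨φ, hφ, hφg⟩ := id hg
  obtain ⟨B, -, -, hB⟩ := hφ.exists_isBreakpointSet
  refine (B.finite_toSet.image ((↑) : ℝ → Circle𝕋)).subset fun x hx => ?_
  obtain ⟨r, rfl⟩ := QuotientAddGroup.mk_surjective x
  by_contra hnot
  have hr : r ∉ intTranslates B := by
    rintro ⟨c, hc, k, rfl⟩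
    exact hnot ⟨c, hc, (coe_add_intCast c k).symm⟩
  obtain ⟨ε, hε, n, hn⟩ := hB.exists_affineOn_of_notMem hr
  have hnhds : Icc (r - ε) (r + ε) ∈ 𝓝 r := Icc_mem_nhds (by linarith) (by linarith)
  have hrmem : r ∈ Icc (r - ε) (r + ε) := mem_of_mem_nhds hnhds
  refine hx ?_
  rw [deltaLog, hg.logRightDeriv_eq hφ.continuous hφg rfl
      (hasDerivWithinAt_of_eq_affine (mem_nhdsWithin_of_mem_nhds hnhds) fun _ => hn.eq_add hrmem),
    hg.logLeftDeriv_eq hφ.continuous hφg rfl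
      (hasDerivWithinAt_of_eq_affine (mem_nhdsWithin_of_mem_nhds hnhds) fun _ => hn.eq_add hrmem),
    sub_self]

end Slopes

section Cocycle

variable {g h k : Homeomorph Circle𝕋 Circle𝕋}

theorem gvSummand_eq (hh : IsPDA h) (hg : IsPDA g) (x : Circle𝕋) :
    gvSummand g h x =
      logRightDeriv h x * deltaLog g (h x) - deltaLog h x * logRightDeriv g (h x) := by
  rw [gvSummand, deltaLog_trans hh hg, logRightDeriv_trans hh hg]
  ring

theorem IsPDA.hasFiniteSupport_gvSummand (hh : IsPDA h) (hg : IsPDA g) :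
    (gvSummand g h).HasFiniteSupport := by
  refine (hh.hasFiniteSupport_deltaLog.union (hh.trans hg).hasFiniteSupport_deltaLog).subset ?_
  intro x hx
  by_contra hx'
  simp only [mem_union, mem_support, not_or, not_not] at hx'
  exact hx (by rw [gvSummand, hx'.1, hx'.2, mul_zero, zero_mul, sub_zero])

theorem gvSummand_cocycle (hk : IsPDA k) (hh : IsPDA h) (hg : IsPDA g) (x : Circle𝕋) :
    gvSummand h k x - gvSummand (h.trans g) k x + gvSummand g (k.trans h) x =
      gvSummand g h (k x) := by
  rw [gvSummand_eq hk hh, gvSummand_eq hk (hh.trans hg), gvSummand_eq (hk.trans hh) hg,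
    gvSummand_eq hh hg, deltaLog_trans hh hg, logRightDeriv_trans hh hg, deltaLog_trans hk hh,
    logRightDeriv_trans hk hh]
  simp only [Homeomorph.trans_apply]
  ring

end Cocycle

/-- For `g, h` in Thompson's group `T` the summand of `gv(g,h)` vanishes for all but finitely
many `x ∈ 𝕋`, so that `gv(g,h)` is a well-defined integer, and `gv` is a 2-cocycle on `T`
for the trivial action of `T` on `ℤ`:
`gv(h,k) − gv(g∘h, k) + gv(g, h∘k) − gv(g,h) = 0`. -/
theorem gv_welldefined_and_cocycle :
    (∀ g h : Homeomorph Circle𝕋 Circle𝕋, IsPDA g → IsPDA h →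
      {x : Circle𝕋 | gvSummand g h x ≠ 0}.Finite) ∧
    (∀ g h k : Homeomorph Circle𝕋 Circle𝕋, IsPDA g → IsPDA h → IsPDA k →
      gv h k - gv (h.trans g) k + gv g (k.trans h) - gv g h = 0) := by
  refine ⟨fun g h hg hh => hh.hasFiniteSupport_gvSummand hg, fun g h k hg hh hk => ?_⟩
  have hsum : gv h k - gv (h.trans g) k + gv g (k.trans h) = ∑ᶠ x, gvSummand g h (k x) := by
    have h₁ := hk.hasFiniteSupport_gvSummand hh
    have h₂ := hk.hasFiniteSupport_gvSummand (hh.trans hg)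
    rw [gv, gv, gv, ← finsum_sub_distrib h₁ h₂,
      ← finsum_add_distrib (h₁.fun_sub h₂) ((hk.trans hh).hasFiniteSupport_gvSummand hg)]
    exact finsum_congr (gvSummand_cocycle hk hh hg)
  rw [hsum, gv, sub_eq_zero]
  exact finsum_comp_equiv k.toEquiv
end
end

section
/- Let X be an infinite set and let G be any subgroup of the permutation group of X containing 𝔖(X). Then 𝔖(X) and 𝔄(X) are normal subgroups of G; the quotient group 𝔖(X)/𝔄(X) has order 2; and the image of 𝔖(X)/𝔄(X) in G/𝔄(X) is contained in the center of G/𝔄(X), so that 1 → ℤ/2ℤ → G/𝔄(X) → G/𝔖(X) → 1 is a central extension. -/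
/-!
`𝔖(X)` is generated by transpositions, and any two transpositions are conjugate inside `𝔖(X)`,
so the abelianization of `𝔖(X)` is generated by the class of a single transposition, whose
square is trivial. The sign of the restriction to the (finite) support is a homomorphism
`𝔖(X) → ℤˣ` sending transpositions to `-1`; hence the abelianization has order exactly `2`
and `𝔄(X)` is the kernel of this sign. Conjugating by any permutation `g` of `X` preserves the
sign (both sides agree on transpositions), so every commutator `⁅s, g⁆` with `s ∈ 𝔖(X)` lies
in `𝔄(X)`. This gives at once the normality of `𝔄(X)` and the centrality of `𝔖(X)/𝔄(X)`
in `G/𝔄(X)`.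
-/

noncomputable section

/-- `𝔖(X)`: the subgroup of finitely supported permutations of a set `X`. -/
def finSuppPerm (X : Type*) : Subgroup (Equiv.Perm X) where
  carrier := {f | {x | f x ≠ x}.Finite}
  one_mem' := by simp
  mul_mem' := by
    intro f g hf hg
    apply (hf.union hg).subset
    intro x hx
    by_contra h
    simp only [Set.mem_union, Set.mem_setOf_eq, not_or, not_not] at h
    exact hx (by simp [Equiv.Perm.mul_apply, h.1, h.2])
  inv_mem' := by
    intro f hf
    show {x | f⁻¹ x ≠ x}.Finite
    have h : {x | f⁻¹ x ≠ x} = {x | f x ≠ x} := by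
      ext x
      simp [Equiv.Perm.inv_eq_iff_eq, ne_comm]
      first
        | (rw [Equiv.eq_symm_apply]; exact not_congr eq_comm)
        | exact fun _ => by grind
    rw [h]
    exact hf

/-- `𝔄(X)`: the finitary alternating group of a set `X`, i.e. the commutator subgroup of
the group `𝔖(X)` of finitely supported permutations, viewed as a subgroup of `Equiv.Perm X`. -/
def finAltPerm (X : Type*) : Subgroup (Equiv.Perm X) :=
  Subgroup.map (finSuppPerm X).subtype (commutator ↥(finSuppPerm X))

open Equiv Equiv.Perm Subgroup MulAction
open scoped commutatorElement

section FinitarySymmetricGroup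

variable {X : Type*}

instance finSuppPerm_normal : (finSuppPerm X).Normal where
  conj_mem f hf g := by
    show (fixedBy X (g * f * g⁻¹))ᶜ.Finite
    rw [← smul_fixedBy, ← Set.smul_set_compl]
    exact hf.image _

theorem apply_mem_iff_of_movedBy_subset {f : Perm X} {s : Set X} (hs : (fixedBy X f)ᶜ ⊆ s)
    (x : X) : f x ∈ s ↔ x ∈ s :=
  smul_mem_of_set_mem_fixedBy (set_mem_fixedBy_of_movedBy_subset hs)

section

variable [DecidableEq X]

theorem finSuppPerm_eq_closure_isSwap :
    finSuppPerm X = closure {σ : Perm X | σ.IsSwap} := by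
  ext f
  exact mem_closure_isSwap'.symm

theorem closure_isSwap_finSuppPerm_eq_top :
    closure {σ : finSuppPerm X | (σ : Perm X).IsSwap} = ⊤ := by
  have hsubst {H : Subgroup (Perm X)} (hH : H = closure {σ : Perm X | σ.IsSwap}) :
      closure {σ : H | (σ : Perm X).IsSwap} = ⊤ := by
    subst hH
    exact closure_preimage_eq_top _
  exact hsubst finSuppPerm_eq_closure_isSwap

theorem swap_mem_finSuppPerm (a b : X) : swap a b ∈ finSuppPerm X :=
  finite_compl_fixedBy_swap

theorem exists_mem_finSuppPerm_apply_eq_and_apply_eq {a b c d : X} (hab : a ≠ b) (hcd : c ≠ d) :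
    ∃ g ∈ finSuppPerm X, g a = c ∧ g b = d := by
  -- `swap a c` sends `a` to `c`; the second swap then moves the image of `b` to `d`, fixing `c`.
  refine ⟨swap (swap a c b) d * swap a c,
    mul_mem (swap_mem_finSuppPerm _ _) (swap_mem_finSuppPerm _ _), ?_, by simp⟩
  have hc : c ≠ swap a c b := by simpa using (swap a c).injective.ne hab
  simp [swap_apply_of_ne_of_ne hc hcd]

def signOnSupport (f : finSuppPerm X) : ℤˣ :=
  haveI : Fintype {x // (f : Perm X) x ≠ x} := f.2.fintype
  sign ((f : Perm X).subtypePerm (p := fun x => (f : Perm X) x ≠ x) (by simp))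

theorem signOnSupport_eq_sign_subtypePerm {p : X → Prop} [DecidablePred p]
    [Fintype (Subtype p)] (f : finSuppPerm X) (h₁ : ∀ x, p ((f : Perm X) x) ↔ p x)
    (h₂ : ∀ x, (f : Perm X) x ≠ x → p x) :
    signOnSupport f = sign ((f : Perm X).subtypePerm h₁) := by
  let : Fintype {x // (f : Perm X) x ≠ x} := f.2.fintype
  refine sign_bij (fun x _ => ⟨x, h₂ x x.2⟩) (fun _ _ _ => rfl)
    (fun _ _ _ _ h => Subtype.ext (Subtype.mk.inj h)) fun y hy => ?_
  exact ⟨⟨y, fun h => hy (Subtype.ext h)⟩,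
    fun h => hy (Subtype.ext (congrArg Subtype.val h :)), rfl⟩

def finSign : finSuppPerm X →* ℤˣ :=
  MonoidHom.mk' signOnSupport fun f g => by
    classical
    set s := (fixedBy X (f : Perm X))ᶜ ∪ (fixedBy X (g : Perm X))ᶜ
    have hf : (fixedBy X (f : Perm X))ᶜ ⊆ s := Set.subset_union_left
    have hg : (fixedBy X (g : Perm X))ᶜ ⊆ s := Set.subset_union_right
    have hfg : (fixedBy X ((f : Perm X) * g))ᶜ ⊆ s :=
      (Set.compl_subset_compl.mpr (fixedBy_mul X _ _)).trans (Set.compl_inter _ _).subset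
    let : Fintype s := (f.2.union g.2).fintype
    rw [signOnSupport_eq_sign_subtypePerm (f * g) (apply_mem_iff_of_movedBy_subset hfg) hfg,
      signOnSupport_eq_sign_subtypePerm f (apply_mem_iff_of_movedBy_subset hf) hf,
      signOnSupport_eq_sign_subtypePerm g (apply_mem_iff_of_movedBy_subset hg) hg, ← map_mul]
    rfl

theorem finSign_of_isSwap {σ : finSuppPerm X} (hσ : (σ : Perm X).IsSwap) : finSign σ = -1 := by
  obtain ⟨a, b, hab, hσ⟩ := hσ
  have h₂ (x : X) (hx : (σ : Perm X) x ≠ x) : x ∈ ({a, b} : Set X) := by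
    contrapose! hx
    simp_all [swap_apply_of_ne_of_ne]
  change signOnSupport σ = -1
  rw [signOnSupport_eq_sign_subtypePerm σ (apply_mem_iff_of_movedBy_subset h₂) h₂]
  have ha : a ∈ ({a, b} : Set X) := Set.mem_insert a {b}
  have hb : b ∈ ({a, b} : Set X) := Set.mem_insert_of_mem a rfl
  have hσ' : (σ : Perm X).subtypePerm (apply_mem_iff_of_movedBy_subset h₂) =
      swap (⟨a, ha⟩ : ({a, b} : Set X)) ⟨b, hb⟩ := by
    ext ⟨x, hx⟩
    rcases hx with rfl | rfl <;> simp [hσ]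
  rw [hσ', sign_swap fun h => hab (congrArg Subtype.val h)]

theorem finSign_conjNormal (g : Perm X) (f : finSuppPerm X) :
    finSign (MulAut.conjNormal g f) = finSign f := by
  suffices finSign.comp (MulAut.conjNormal g).toMonoidHom = finSign from
    DFunLike.congr_fun this f
  refine MonoidHom.eq_of_eqOn_dense closure_isSwap_finSuppPerm_eq_top fun σ hσ => ?_
  obtain ⟨a, b, hab, hσ'⟩ := id hσ
  refine (finSign_of_isSwap ⟨g a, g b, g.injective.ne hab, ?_⟩).trans
    (finSign_of_isSwap hσ).symm
  simp [MulAut.conjNormal_apply, hσ', swap_apply_apply]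

theorem abelianization_of_eq_of_isSwap {σ τ : finSuppPerm X} (hσ : (σ : Perm X).IsSwap)
    (hτ : (τ : Perm X).IsSwap) : Abelianization.of σ = Abelianization.of τ := by
  obtain ⟨a, b, hab, hσ⟩ := hσ
  obtain ⟨c, d, hcd, hτ⟩ := hτ
  obtain ⟨g, hg, hga, hgb⟩ := exists_mem_finSuppPerm_apply_eq_and_apply_eq hab hcd
  have hconj : τ = ⟨g, hg⟩ * σ * ⟨g, hg⟩⁻¹ := by
    ext1
    simp [hσ, hτ, ← hga, ← hgb, swap_apply_apply]
  rw [hconj, map_mul, map_mul, map_inv, mul_inv_cancel_comm]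

theorem finSign_surjective [Nontrivial X] : Function.Surjective (finSign (X := X)) := by
  obtain ⟨a, b, hab⟩ := exists_pair_ne X
  intro u
  rcases Int.units_eq_one_or u with rfl | rfl
  · exact ⟨1, map_one _⟩
  · exact ⟨⟨swap a b, swap_mem_finSuppPerm a b⟩, finSign_of_isSwap ⟨a, b, hab, rfl⟩⟩

end

theorem card_abelianization_finSuppPerm [Nontrivial X] :
    Nat.card (Abelianization (finSuppPerm X)) = 2 := by
  classical
  obtain ⟨a, b, hab⟩ := exists_pair_ne X
  set τ : finSuppPerm X := ⟨swap a b, swap_mem_finSuppPerm a b⟩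
  have hτ : (τ : Perm X).IsSwap := ⟨a, b, hab, rfl⟩
  have hgen : zpowers (Abelianization.of τ) = ⊤ := by
    have himage : Abelianization.of '' {σ : finSuppPerm X | (σ : Perm X).IsSwap} =
        {Abelianization.of τ} := by
      refine Set.eq_singleton_iff_unique_mem.mpr ⟨⟨τ, hτ, rfl⟩, ?_⟩
      rintro _ ⟨σ, hσ, rfl⟩
      exact abelianization_of_eq_of_isSwap hσ hτ
    rw [zpowers_eq_closure, ← himage, ← MonoidHom.map_closure,
      closure_isSwap_finSuppPerm_eq_top, ← MonoidHom.range_eq_map, MonoidHom.range_eq_top]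
    exact QuotientGroup.mk_surjective
  have hsq : Abelianization.of τ ^ 2 = 1 := by
    rw [← map_pow, show τ ^ 2 = 1 from Subtype.ext (swap_mul_self a b), map_one]
  have hne : Abelianization.of τ ≠ 1 := fun h => by
    simpa [finSign_of_isSwap hτ] using congrArg (Abelianization.lift finSign) h
  rw [← card_top, ← hgen, Nat.card_zpowers, orderOf_eq_prime hsq hne]

theorem ker_finSign [DecidableEq X] [Nontrivial X] :
    (finSign (X := X)).ker = commutator (finSuppPerm X) := by
  refine le_antisymm (fun f hf => ?_) (Abelianization.commutator_subset_ker finSign)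
  have hcard := card_abelianization_finSuppPerm (X := X)
  have : Finite (Abelianization (finSuppPerm X)) := Nat.finite_of_card_ne_zero (by omega)
  have hbij : Function.Bijective (Abelianization.lift (finSign (X := X))) := by
    refine Function.Surjective.bijective_of_nat_card_le (fun u => ?_) ?_
    · obtain ⟨g, hg⟩ := finSign_surjective (X := X) u
      exact ⟨Abelianization.of g, by rwa [Abelianization.lift_apply_of]⟩
    · rw [hcard, Nat.card_eq_fintype_card, Fintype.card_units_int]
  rw [← Abelianization.ker_of, MonoidHom.mem_ker]
  exact hbij.1 (by simpa using hf)

theorem commutatorElement_mem_finAltPerm [Nontrivial X] {s : Perm X} (hs : s ∈ finSuppPerm X)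
    (g : Perm X) : ⁅s, g⁆ ∈ finAltPerm X := by
  classical
  refine mem_map.mpr ⟨⟨s, hs⟩ * (MulAut.conjNormal g ⟨s, hs⟩)⁻¹, ?_, ?_⟩
  · rw [← ker_finSign, MonoidHom.mem_ker, map_mul, map_inv, finSign_conjNormal, mul_inv_cancel]
  · simp [commutatorElement_def, MulAut.conjNormal_apply, mul_assoc]

theorem finAltPerm_le_finSuppPerm : finAltPerm X ≤ finSuppPerm X :=
  map_subtype_le _

instance finAltPerm_normal [Nontrivial X] : (finAltPerm X).Normal where
  conj_mem a ha g := by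
    -- `g * a * g⁻¹ = ⁅a, g⁆⁻¹ * a`
    have h := mul_mem
      (inv_mem (commutatorElement_mem_finAltPerm (finAltPerm_le_finSuppPerm ha) g)) ha
    simpa [commutatorElement_def, mul_assoc] using h

end FinitarySymmetricGroup

theorem finSuppPerm_central_extension_general (X : Type*) [Infinite X]
    (G : Subgroup (Equiv.Perm X)) :
    ((finSuppPerm X).subgroupOf G).Normal ∧
    ∃ hA : ((finAltPerm X).subgroupOf G).Normal,
      Nat.card (↥(finSuppPerm X) ⧸ commutator ↥(finSuppPerm X)) = 2 ∧
      (letI := hA;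
        Subgroup.map (QuotientGroup.mk' ((finAltPerm X).subgroupOf G))
            ((finSuppPerm X).subgroupOf G) ≤
          Subgroup.center (↥G ⧸ (finAltPerm X).subgroupOf G)) := by
  refine ⟨inferInstance, inferInstance, card_abelianization_finSuppPerm, ?_⟩
  rw [map_le_iff_le_comap, ← Subgroup.upperCentralSeriesStep_eq_comap_center]
  intro s hs g
  exact commutatorElement_mem_finAltPerm (mem_subgroupOf.mp hs) g

/-- Let `X` be an infinite set and `G` any subgroup of the permutation group of `X` containing
`𝔖(X)`. Then `𝔖(X)` and `𝔄(X)` are normal subgroups of `G`, the quotient `𝔖(X)/𝔄(X)` has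
order 2, and the image of `𝔖(X)/𝔄(X)` in `G/𝔄(X)` is contained in the center of `G/𝔄(X)`,
so that `1 → ℤ/2ℤ → G/𝔄(X) → G/𝔖(X) → 1` is a central extension. -/
theorem finSuppPerm_central_extension (X : Type*) [Infinite X]
    (G : Subgroup (Equiv.Perm X)) (hG : finSuppPerm X ≤ G) :
    ((finSuppPerm X).subgroupOf G).Normal ∧
    ∃ hA : ((finAltPerm X).subgroupOf G).Normal,
      Nat.card (↥(finSuppPerm X) ⧸ commutator ↥(finSuppPerm X)) = 2 ∧
      (letI := hA;
        Subgroup.map (QuotientGroup.mk' ((finAltPerm X).subgroupOf G))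
            ((finSuppPerm X).subgroupOf G) ≤
          Subgroup.center (↥G ⧸ (finAltPerm X).subgroupOf G)) :=
  finSuppPerm_central_extension_general X G
end
end

section
/- For every g in Thompson's group T, the permutation of D = ℤ[1/2]/ℤ induced by g is a piecewise automorphism of the graph Γ: there exists a finite subset F ⊆ D such that for all u, v ∈ D \ F, u and v are adjacent in Γ if and only if g(u) and g(v) are adjacent in Γ. -/
noncomputable section

/-- The set `D = ℤ[1/2]/ℤ` of dyadic points of the circle. -/
def dyadicPoints : Set Circle𝕋 := {x | ∃ r : ℝ, IsDyadic r ∧ x = ((r : ℝ) : Circle𝕋)}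

/-- The graph `Γ` on the dyadic points of the circle (the rooted dyadic tree with one extra
edge): for every standard dyadic interval `I = [k/2^n, (k+1)/2^n]` with `n ≥ 1`, the midpoint
`(2k+1)/2^{n+1}` of `I` is adjacent to the midpoints `(4k+1)/2^{n+2}` and `(4k+3)/2^{n+2}` of
the two halves of `I`; in addition `0` is adjacent to `1/2`. -/
def GammaAdj (x y : Circle𝕋) : Prop :=
  (∃ n : ℕ, 1 ≤ n ∧ ∃ k : ℕ, k < 2 ^ n ∧
    ((x = (((2 * (k : ℝ) + 1) / 2 ^ (n + 1) : ℝ) : Circle𝕋) ∧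
        (y = (((4 * (k : ℝ) + 1) / 2 ^ (n + 2) : ℝ) : Circle𝕋) ∨
         y = (((4 * (k : ℝ) + 3) / 2 ^ (n + 2) : ℝ) : Circle𝕋))) ∨
     (y = (((2 * (k : ℝ) + 1) / 2 ^ (n + 1) : ℝ) : Circle𝕋) ∧
        (x = (((4 * (k : ℝ) + 1) / 2 ^ (n + 2) : ℝ) : Circle𝕋) ∨
         x = (((4 * (k : ℝ) + 3) / 2 ^ (n + 2) : ℝ) : Circle𝕋))))) ∨
  (x = (0 : Circle𝕋) ∧ y = (((1 / 2 : ℝ) : ℝ) : Circle𝕋)) ∨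
  (y = (0 : Circle𝕋) ∧ x = (((1 / 2 : ℝ) : ℝ) : Circle𝕋))

/-!
A lift `φ` of `g` is, on every cell `[i/2^M, (i+1)/2^M]` of a fine enough dyadic grid, an affine
map `x ↦ β + 2^n x` with `β` dyadic. A point `a = j/2^m` (`j` odd) with `m` larger than the
denominators of the grid and of the intercepts lies at distance `≥ 2^{-m}` from the ends of its
cell, so `φ` maps its two children `a ± 2^{-(m+1)}` in `Γ` to `φ a ± 2^{-(s+1)}`, the two children
of `φ a`, whose level is `s = m - n`. Thus, away from the finitely many points of low level, `g`
maps parent-child pairs of `Γ` to parent-child pairs and, being injective, only those. On the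
circle the level `m` of a dyadic point is read off its additive order `2^m`.
-/

open Set

def dyadicSubring : Subring ℝ where
  carrier := {x | IsDyadic x}
  zero_mem' := ⟨0, 0, by simp⟩
  one_mem' := ⟨1, 0, by simp⟩
  add_mem' := by
    rintro _ _ ⟨p, e, rfl⟩ ⟨q, f, rfl⟩
    exact ⟨p * 2 ^ f + q * 2 ^ e, e + f, by push_cast; field_simp; ring⟩
  mul_mem' := by
    rintro _ _ ⟨p, e, rfl⟩ ⟨q, f, rfl⟩
    exact ⟨p * q, e + f, by push_cast; field_simp; ring⟩
  neg_mem' := by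
    rintro _ ⟨p, e, rfl⟩
    exact ⟨-p, e, by push_cast; ring⟩

theorem isDyadic_two_zpow (n : ℤ) : IsDyadic ((2 : ℝ) ^ n) := by
  obtain ⟨k, rfl | rfl⟩ := Int.eq_nat_or_neg n
  · exact ⟨2 ^ k, 0, by simp⟩
  · exact ⟨1, k, by simp⟩

def dyadicGrid (k : ℕ) : AddSubgroup ℝ := AddSubgroup.zmultiples ((2 : ℝ) ^ k)⁻¹

theorem mem_dyadicGrid {x : ℝ} {k : ℕ} : x ∈ dyadicGrid k ↔ ∃ p : ℤ, x = p / 2 ^ k := by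
  simp only [dyadicGrid, AddSubgroup.mem_zmultiples_iff, zsmul_eq_mul, div_eq_mul_inv, eq_comm]

theorem isDyadic_iff_exists_mem_dyadicGrid {x : ℝ} : IsDyadic x ↔ ∃ k, x ∈ dyadicGrid k := by
  simp only [IsDyadic, mem_dyadicGrid]
  exact exists_comm

theorem intCast_mem_dyadicGrid (z : ℤ) (k : ℕ) : (z : ℝ) ∈ dyadicGrid k :=
  mem_dyadicGrid.2 ⟨z * 2 ^ k, by push_cast; field_simp⟩

theorem dyadicGrid_mono {k l : ℕ} (h : k ≤ l) : dyadicGrid k ≤ dyadicGrid l := by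
  refine AddSubgroup.zmultiples_le.2 (mem_dyadicGrid.2 ⟨2 ^ (l - k), ?_⟩)
  rw [← pow_mul_pow_sub 2 h]
  push_cast
  field_simp

theorem exists_forall_mem_dyadicGrid {B : Finset ℝ} (hB : ∀ b ∈ B, IsDyadic b) :
    ∃ M, ∀ b ∈ B, b ∈ dyadicGrid M := by
  choose! e he using fun b hb => isDyadic_iff_exists_mem_dyadicGrid.1 (hB b hb)
  exact ⟨B.sup e, fun b hb => dyadicGrid_mono (Finset.le_sup hb) (he b hb)⟩

theorem notMem_Ioo_of_mem_dyadicGrid {x : ℝ} {k : ℕ} (hx : x ∈ dyadicGrid k) (i : ℤ) :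
    x ∉ Ioo ((i : ℝ) / 2 ^ k) ((i + 1) / 2 ^ k) := by
  obtain ⟨p, rfl⟩ := mem_dyadicGrid.1 hx
  rintro ⟨h₁, h₂⟩
  have h₁ : i < p := by exact_mod_cast (div_lt_div_iff_of_pos_right (by positivity)).1 h₁
  have h₂ : p < i + 1 := by exact_mod_cast (div_lt_div_iff_of_pos_right (by positivity)).1 h₂
  omega

theorem two_zpow_mul_div_two_pow {n : ℤ} {m s : ℕ} (h : (s : ℤ) = m - n) (x : ℝ) :
    2 ^ n * (x / 2 ^ m) = x / 2 ^ s := by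
  have h2m : (2 : ℝ) ^ m = 2 ^ n * 2 ^ s := by
    rw [← zpow_natCast, ← zpow_natCast, ← zpow_add₀ two_ne_zero]
    congr 1
    omega
  rw [h2m]
  field_simp

def HasDyadicLevel (x : ℝ) (m : ℕ) : Prop := ∃ j : ℤ, Odd j ∧ x = j / 2 ^ m

namespace HasDyadicLevel

variable {a c : ℝ} {m k : ℕ}

theorem add_mem_dyadicGrid (ha : HasDyadicLevel a m) (hc : c ∈ dyadicGrid k) (hk : k < m) :
    HasDyadicLevel (a + c) m := by
  obtain ⟨j, hj, rfl⟩ := ha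
  obtain ⟨p, rfl⟩ := mem_dyadicGrid.1 hc
  refine ⟨j + p * 2 ^ (m - k), hj.add_even ((Int.even_pow.2 ⟨even_two, by omega⟩).mul_left p), ?_⟩
  rw [← pow_mul_pow_sub 2 hk.le]
  push_cast
  field_simp

theorem two_zpow_mul (ha : HasDyadicLevel a m) {n : ℤ} {s : ℕ} (hs : (s : ℤ) = m - n) :
    HasDyadicLevel (2 ^ n * a) s := by
  obtain ⟨j, hj, rfl⟩ := ha
  exact ⟨j, hj, two_zpow_mul_div_two_pow hs j⟩

theorem one_div_le_abs (ha : HasDyadicLevel a m) : 1 / 2 ^ m ≤ |a| := by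
  obtain ⟨j, hj, rfl⟩ := ha
  have hj : (1 : ℝ) ≤ |(j : ℝ)| := by
    exact_mod_cast Int.one_le_abs (by rintro rfl; exact Int.not_odd_zero hj)
  rw [abs_div, abs_of_pos (by positivity : (0 : ℝ) < 2 ^ m)]
  gcongr

theorem one_div_le_abs_sub (ha : HasDyadicLevel a m) (hc : c ∈ dyadicGrid k) (hk : k < m) :
    1 / 2 ^ m ≤ |a - c| :=
  (ha.add_mem_dyadicGrid (neg_mem hc) hk).one_div_le_abs

theorem addOrderOf_coe (ha : HasDyadicLevel a m) : addOrderOf (a : Circle𝕋) = 2 ^ m := by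
  obtain ⟨j, hj, rfl⟩ := ha
  have hcop : j.natAbs.gcd (2 ^ m) = 1 :=
    Nat.Coprime.pow_right m (Nat.coprime_two_right.2 (Int.natAbs_odd.2 hj))
  simpa using AddCircle.addOrderOf_div_of_gcd_eq_one' (p := (1 : ℝ)) (by positivity) hcop

end HasDyadicLevel

theorem IsDyadic.mem_dyadicGrid_or_hasDyadicLevel {x : ℝ} (hx : IsDyadic x) (L : ℕ) :
    x ∈ dyadicGrid L ∨ ∃ m, L < m ∧ HasDyadicLevel x m := by
  obtain ⟨p, e, rfl⟩ := hx
  induction e generalizing p with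
  | zero => simpa using Or.inl (intCast_mem_dyadicGrid p L)
  | succ e ih =>
    rcases Int.even_or_odd p with ⟨q, rfl⟩ | hp
    · have hq : ((q + q : ℤ) : ℝ) / 2 ^ (e + 1) = q / 2 ^ e := by
        push_cast
        field_simp
        ring
      exact hq ▸ ih q
    · by_cases he : e + 1 ≤ L
      · exact Or.inl (dyadicGrid_mono he (mem_dyadicGrid.2 ⟨p, rfl⟩))
      · exact Or.inr ⟨e + 1, by omega, p, hp, rfl⟩

theorem mem_dyadicPoints_of_two_pow_nsmul_eq_zero {u : Circle𝕋} {L : ℕ}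
    (hu : 2 ^ L • u = 0) : u ∈ dyadicPoints := by
  obtain ⟨p, -, rfl⟩ := (AddCircle.nsmul_eq_zero_iff (by positivity)).1 hu
  exact ⟨_, ⟨p, L, by push_cast; ring⟩, rfl⟩

theorem two_pow_nsmul_coe_eq_zero_of_mem_dyadicGrid {x : ℝ} {L : ℕ} (hx : x ∈ dyadicGrid L) :
    2 ^ L • (x : Circle𝕋) = 0 := by
  obtain ⟨p, rfl⟩ := mem_dyadicGrid.1 hx
  rw [← AddCircle.coe_nsmul, AddCircle.coe_eq_zero_iff]
  exact ⟨p, by simp [nsmul_eq_mul]; field_simp⟩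

theorem exists_hasDyadicLevel_of_mem_diff {u : Circle𝕋} {L : ℕ}
    (hu : u ∈ dyadicPoints \ {u | 2 ^ L • u = 0}) :
    ∃ a m, L < m ∧ HasDyadicLevel a m ∧ u = a := by
  obtain ⟨⟨r, hr, rfl⟩, hL⟩ := hu
  rcases hr.mem_dyadicGrid_or_hasDyadicLevel L with hr | ⟨m, hm, hrm⟩
  · exact absurd (two_pow_nsmul_coe_eq_zero_of_mem_dyadicGrid hr) hL
  · exact ⟨r, m, hm, hrm, rfl⟩

theorem addOrderOf_eq_two_pow_succ_iff {x : Circle𝕋} {n : ℕ} :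
    addOrderOf x = 2 ^ (n + 1) ↔
      ∃ k : ℕ, k < 2 ^ n ∧ x = (((2 * k + 1) / 2 ^ (n + 1) : ℝ) : Circle𝕋) := by
  constructor
  · intro hx
    obtain ⟨j, hj, hcop, rfl⟩ := (AddCircle.addOrderOf_eq_pos_iff (by positivity)).1 hx
    obtain ⟨k, rfl⟩ : Odd j :=
      Nat.coprime_two_right.1 (Nat.Coprime.coprime_dvd_right (dvd_pow_self 2 n.succ_ne_zero) hcop)
    refine ⟨k, by rw [pow_succ] at hj; omega, ?_⟩
    push_cast
    rw [mul_one]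
  · rintro ⟨k, -, rfl⟩
    exact HasDyadicLevel.addOrderOf_coe ⟨2 * k + 1, by simp [parity_simps], by push_cast; rfl⟩

/-- `x`, of additive order `2^m`, is the midpoint `(2k+1)/2^m` of a standard dyadic interval of
length `2^{1-m} ≤ 1/2`, and `y` is the midpoint of one of its two halves. -/
def IsGammaParent (x y : Circle𝕋) : Prop :=
  ∃ m, 2 ≤ m ∧ addOrderOf x = 2 ^ m ∧
    (y = x + ((1 / 2 ^ (m + 1) : ℝ) : Circle𝕋) ∨ y = x - ((1 / 2 ^ (m + 1) : ℝ) : Circle𝕋))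

theorem isGammaParent_iff {x y : Circle𝕋} :
    IsGammaParent x y ↔ ∃ n : ℕ, 1 ≤ n ∧ ∃ k : ℕ, k < 2 ^ n ∧
      x = (((2 * (k : ℝ) + 1) / 2 ^ (n + 1) : ℝ) : Circle𝕋) ∧
        (y = (((4 * (k : ℝ) + 1) / 2 ^ (n + 2) : ℝ) : Circle𝕋) ∨
         y = (((4 * (k : ℝ) + 3) / 2 ^ (n + 2) : ℝ) : Circle𝕋)) := by
  have hchild (k n : ℕ) :
      (2 * (k : ℝ) + 1) / 2 ^ (n + 1) + 1 / 2 ^ (n + 2) = (4 * k + 3) / 2 ^ (n + 2) ∧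
      (2 * (k : ℝ) + 1) / 2 ^ (n + 1) - 1 / 2 ^ (n + 2) = (4 * k + 1) / 2 ^ (n + 2) := by
    constructor <;> · field_simp; ring
  constructor
  · rintro ⟨_ | n, hn, hx, hy⟩
    · omega
    obtain ⟨k, hk, rfl⟩ := addOrderOf_eq_two_pow_succ_iff.1 hx
    refine ⟨n, by omega, k, hk, rfl, ?_⟩
    rwa [← AddCircle.coe_add, ← AddCircle.coe_sub, (hchild k n).1, (hchild k n).2, or_comm] at hy
  · rintro ⟨n, hn, k, hk, rfl, hy⟩
    refine ⟨n + 1, by omega, addOrderOf_eq_two_pow_succ_iff.2 ⟨k, hk, rfl⟩, ?_⟩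
    rwa [← AddCircle.coe_add, ← AddCircle.coe_sub, (hchild k n).1, (hchild k n).2, or_comm]

theorem gammaAdj_iff {x y : Circle𝕋} :
    GammaAdj x y ↔ IsGammaParent x y ∨ IsGammaParent y x ∨
      (x = 0 ∧ y = ((1 / 2 : ℝ) : Circle𝕋)) ∨ (y = 0 ∧ x = ((1 / 2 : ℝ) : Circle𝕋)) := by
  simp only [GammaAdj, isGammaParent_iff, and_or_left, exists_or, or_assoc]

theorem ne_zero_and_ne_half_of_addOrderOf {x : Circle𝕋} {m : ℕ} (hx : addOrderOf x = 2 ^ m)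
    (hm : 2 ≤ m) : x ≠ 0 ∧ x ≠ ((1 / 2 : ℝ) : Circle𝕋) := by
  have h4 : 2 ^ 2 ≤ 2 ^ m := Nat.pow_le_pow_right two_pos hm
  constructor <;> rintro rfl
  · simp at hx
    omega
  · have h2 := AddCircle.addOrderOf_period_div (p := (1 : ℝ)) (n := 2) two_pos
    rw [Nat.cast_ofNat, hx] at h2
    omega

theorem gammaAdj_iff_of_addOrderOf {x y : Circle𝕋} {m n : ℕ} (hx : addOrderOf x = 2 ^ m)
    (hm : 2 ≤ m) (hy : addOrderOf y = 2 ^ n) (hn : 2 ≤ n) :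
    GammaAdj x y ↔ IsGammaParent x y ∨ IsGammaParent y x := by
  obtain ⟨hx0, hx1⟩ := ne_zero_and_ne_half_of_addOrderOf hx hm
  obtain ⟨hy0, hy1⟩ := ne_zero_and_ne_half_of_addOrderOf hy hn
  simp only [gammaAdj_iff, hx0, hy0, false_and, or_false]

theorem isGammaParent_iff_of_addOrderOf {x y : Circle𝕋} {m : ℕ} (hx : addOrderOf x = 2 ^ m)
    (hm : 2 ≤ m) : IsGammaParent x y ↔
      y = x + ((1 / 2 ^ (m + 1) : ℝ) : Circle𝕋) ∨ y = x - ((1 / 2 ^ (m + 1) : ℝ) : Circle𝕋) := by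
  constructor
  · rintro ⟨m', -, hm', hy⟩
    obtain rfl := Nat.pow_right_injective le_rfl (hm'.symm.trans hx)
    exact hy
  · exact fun hy => ⟨m, hm, hx, hy⟩

theorem eq_affine_on_Icc {φ : ℝ → ℝ} (hφ : Continuous φ) {u v r : ℝ} (huv : u < v)
    (h : ∀ x ∈ Ioo u v, ∀ y ∈ Ioo u v, φ x - φ y = r * (x - y)) :
    ∀ x ∈ Icc u v, φ x = φ u + r * (x - u) := by
  obtain ⟨w, hw⟩ := nonempty_Ioo.2 huv
  have hconst : EqOn (fun x => φ x - r * x) (fun _ => φ w - r * w) (Ioo u v) := fun x hx => by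
    linear_combination h x hx w hw
  replace hconst := hconst.closure (by fun_prop) continuous_const
  rw [closure_Ioo huv.ne] at hconst
  intro x hx
  linear_combination hconst hx - hconst (left_mem_Icc.2 huv.le)

/-- `φ` maps the two `Γ`-children `a ± 2^{-(m+1)}` of `a` (of level `m`) to the two `Γ`-children
of `φ a`. -/
def MapsChildrenAt (φ : ℝ → ℝ) (a : ℝ) (m : ℕ) : Prop :=
  ∃ s, 2 ≤ s ∧ addOrderOf (φ a : Circle𝕋) = 2 ^ s ∧
    φ (a + 1 / 2 ^ (m + 1)) = φ a + 1 / 2 ^ (s + 1) ∧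
    φ (a - 1 / 2 ^ (m + 1)) = φ a - 1 / 2 ^ (s + 1)

theorem MapsChildrenAt.add_intCast {φ : ℝ → ℝ} (hφ : ∀ (x : ℝ) (k : ℤ), φ (x + k) = φ x + k)
    {a : ℝ} {m : ℕ} (h : MapsChildrenAt φ a m) (k : ℤ) : MapsChildrenAt φ (a + k) m := by
  obtain ⟨s, hs, hord, hplus, hminus⟩ := h
  refine ⟨s, hs, ?_, ?_, ?_⟩
  · rwa [hφ, AddCircle.coe_add, (AddCircle.coe_eq_zero_iff 1 (x := (k : ℝ))).2 ⟨k, by simp⟩,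
      add_zero]
  · rw [add_right_comm, hφ, hplus, hφ]
    ring
  · rw [add_sub_right_comm, hφ, hminus, hφ]
    ring

theorem mapsChildrenAt_of_eq_affine {φ : ℝ → ℝ} {c d β a : ℝ} {M K m : ℕ} {n : ℤ}
    (hc : c ∈ dyadicGrid M) (hd : d ∈ dyadicGrid M) (hβ : β ∈ dyadicGrid K)
    (hφ : ∀ x ∈ Icc c d, φ x = β + 2 ^ n * x) (ha : HasDyadicLevel a m) (hac : a ∈ Icc c d)
    (hM : M < m) (hK : (K : ℤ) + n + 2 ≤ m) : MapsChildrenAt φ a m := by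
  obtain ⟨s, hs⟩ : ∃ s : ℕ, (s : ℤ) = m - n := ⟨(m - n).toNat, by omega⟩
  have hca := ha.one_div_le_abs_sub hc hM
  have had := ha.one_div_le_abs_sub hd hM
  rw [abs_of_nonneg (sub_nonneg.2 hac.1)] at hca
  rw [abs_of_nonpos (sub_nonpos.2 hac.2)] at had
  have hδ : (1 : ℝ) / 2 ^ (m + 1) ≤ 1 / 2 ^ m := by gcongr <;> norm_num
  have hδ₀ : (0 : ℝ) ≤ 1 / 2 ^ (m + 1) := by positivity
  have hchild : (2 : ℝ) ^ n * (1 / 2 ^ (m + 1)) = 1 / 2 ^ (s + 1) :=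
    two_zpow_mul_div_two_pow (by push_cast; omega) 1
  refine ⟨s, by omega, ?_, ?_, ?_⟩
  · rw [hφ a hac, add_comm]
    exact ((ha.two_zpow_mul hs).add_mem_dyadicGrid hβ (by omega)).addOrderOf_coe
  · rw [hφ _ ⟨by linarith, by linarith⟩, hφ a hac, mul_add, hchild]
    ring
  · rw [hφ _ ⟨by linarith, by linarith⟩, hφ a hac, mul_sub, hchild]
    ring

namespace IsPDALift

variable {φ : ℝ → ℝ}

theorem continuous_s7 (hφ : IsPDALift φ) : Continuous φ :=
  let ⟨hmono, hsurj, _⟩ := hφ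
  hmono.monotone.continuous_of_surjective hsurj

theorem map_add_intCast (hφ : IsPDALift φ) (x : ℝ) (k : ℤ) : φ (x + k) = φ x + k := by
  obtain ⟨-, -, hφ1, -⟩ := hφ
  have hper : Function.Periodic (fun x => φ x - x) 1 := fun x => by
    simp only [hφ1]
    ring
  have := hper.int_mul k x
  simp only [mul_one] at this
  linarith

theorem exists_affine_on_dyadic_cells (hφ : IsPDALift φ) :
    ∃ M : ℕ, ∀ i : ℕ, ∃ n : ℤ, ∀ x ∈ Icc ((i : ℝ) / 2 ^ M) ((i + 1) / 2 ^ M),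
      φ x = φ (i / 2 ^ M) + 2 ^ n * (x - i / 2 ^ M) := by
  have hcont := hφ.continuous_s7
  obtain ⟨-, -, -, -, B, -, hBdy, hpiece⟩ := hφ
  obtain ⟨M, hM⟩ := exists_forall_mem_dyadicGrid hBdy
  refine ⟨M, fun i => ?_⟩
  have hlt : (i : ℝ) / 2 ^ M < (i + 1) / 2 ^ M := by gcongr; linarith
  obtain ⟨n, hn⟩ := hpiece _ _ hlt fun c hc k => by
    simpa using notMem_Ioo_of_mem_dyadicGrid (add_mem (hM c hc) (intCast_mem_dyadicGrid k M)) i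
  exact ⟨n, eq_affine_on_Icc hcont hlt hn⟩

end IsPDALift

theorem isDyadic_apply_div_two_pow {φ : ℝ → ℝ} {M : ℕ} (h0 : IsDyadic (φ 0))
    (hcell : ∀ i : ℕ, ∃ n : ℤ, ∀ x ∈ Icc ((i : ℝ) / 2 ^ M) ((i + 1) / 2 ^ M),
      φ x = φ (i / 2 ^ M) + 2 ^ n * (x - i / 2 ^ M)) (i : ℕ) :
    IsDyadic (φ (i / 2 ^ M)) := by
  induction i with
  | zero => simpa using h0
  | succ i ih =>
    obtain ⟨n, hn⟩ := hcell i
    rw [Nat.cast_succ, hn _ ⟨by gcongr; linarith, le_rfl⟩]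
    refine dyadicSubring.add_mem ih
      (dyadicSubring.mul_mem (isDyadic_two_zpow n) (dyadicSubring.sub_mem ?_ ?_))
    exacts [⟨i + 1, M, by push_cast; rfl⟩, ⟨i, M, rfl⟩]

theorem exists_fract_mem_dyadic_cell (a : ℝ) (M : ℕ) :
    ∃ i : Fin (2 ^ M), Int.fract a ∈ Icc ((i : ℝ) / 2 ^ M) ((i + 1) / 2 ^ M) := by
  have h2M : (0 : ℝ) < 2 ^ M := by positivity
  refine ⟨⟨⌊Int.fract a * 2 ^ M⌋₊, (Nat.floor_lt (by positivity)).2 ?_⟩, ?_, ?_⟩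
  · push_cast
    nlinarith [Int.fract_lt_one a]
  · rw [div_le_iff₀ h2M]
    exact Nat.floor_le (by positivity)
  · rw [le_div_iff₀ h2M]
    exact (Nat.lt_floor_add_one _).le

theorem IsPDALift.exists_mapsChildrenAt {φ : ℝ → ℝ} (hφ : IsPDALift φ) :
    ∃ L, ∀ a m, L < m → HasDyadicLevel a m → MapsChildrenAt φ a m := by
  obtain ⟨M, hcell⟩ := hφ.exists_affine_on_dyadic_cells
  have hφ0 : IsDyadic (φ 0) := hφ.2.2.2.1
  have hlocal : ∀ i : Fin (2 ^ M), ∃ L, ∀ a ∈ Icc ((i : ℝ) / 2 ^ M) ((i + 1) / 2 ^ M), ∀ m,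
      L < m → HasDyadicLevel a m → MapsChildrenAt φ a m := fun i => by
    obtain ⟨n, hn⟩ := hcell i
    have hβ : IsDyadic (φ (i / 2 ^ M) - 2 ^ n * (i / 2 ^ M)) :=
      dyadicSubring.sub_mem (isDyadic_apply_div_two_pow hφ0 hcell i)
        (dyadicSubring.mul_mem (isDyadic_two_zpow n) ⟨i, M, rfl⟩)
    obtain ⟨K, hK⟩ := isDyadic_iff_exists_mem_dyadicGrid.1 hβ
    refine ⟨M + (K + n + 2).toNat, fun a ha m hm hlev => ?_⟩
    refine mapsChildrenAt_of_eq_affine (M := M) (n := n) (mem_dyadicGrid.2 ⟨i, by simp⟩)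
      (mem_dyadicGrid.2 ⟨i + 1, by simp⟩) hK (fun x hx => ?_) hlev ha (by omega) (by omega)
    rw [hn x hx]
    ring
  choose Lc hLc using hlocal
  obtain ⟨L, hL⟩ := Finite.exists_le Lc
  refine ⟨L, fun a m hm ha => ?_⟩
  have hm₀ : 0 < m := by omega
  have hfract : HasDyadicLevel (Int.fract a) m := by
    simpa [Int.fract, sub_eq_add_neg] using
      ha.add_mem_dyadicGrid (intCast_mem_dyadicGrid (-⌊a⌋) 0) hm₀
  obtain ⟨i, hi⟩ := exists_fract_mem_dyadic_cell a M
  have := hLc i (Int.fract a) hi m (by have := hL i; omega) hfract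
  simpa using this.add_intCast hφ.map_add_intCast ⌊a⌋

theorem isGammaParent_apply_iff {g : Circle𝕋 → Circle𝕋} (hg : Function.Injective g)
    {φ : ℝ → ℝ} (hgφ : ∀ x : ℝ, g x = φ x) {a : ℝ} {m : ℕ} (ha : HasDyadicLevel a m)
    (hm : 2 ≤ m) (hφa : MapsChildrenAt φ a m) (y : Circle𝕋) :
    IsGammaParent (g a) (g y) ↔ IsGammaParent a y := by
  obtain ⟨s, hs, hord, hplus, hminus⟩ := hφa
  rw [isGammaParent_iff_of_addOrderOf (by rw [hgφ]; exact hord) hs,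
    isGammaParent_iff_of_addOrderOf ha.addOrderOf_coe hm, hgφ, ← AddCircle.coe_add,
    ← AddCircle.coe_sub, ← hplus, ← hminus, ← hgφ, ← hgφ, hg.eq_iff, hg.eq_iff,
    AddCircle.coe_add, AddCircle.coe_sub]

/-- Every element `g` of Thompson's group `T` induces a piecewise automorphism of the graph
`Γ` on the dyadic points `D`: there is a finite subset `F ⊆ D` such that for all
`u, v ∈ D \ F`, `u` and `v` are adjacent in `Γ` iff `g u` and `g v` are adjacent in `Γ`. -/
theorem thompson_piecewise_graph_aut (g : Homeomorph Circle𝕋 Circle𝕋) (hg : IsPDA g) :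
    ∃ F : Set Circle𝕋, F.Finite ∧ F ⊆ dyadicPoints ∧
      ∀ u ∈ dyadicPoints \ F, ∀ v ∈ dyadicPoints \ F,
        (GammaAdj u v ↔ GammaAdj (g u) (g v)) := by
  obtain ⟨φ, hφ, hgφ⟩ := hg
  obtain ⟨L, hL⟩ := hφ.exists_mapsChildrenAt
  refine ⟨{u | 2 ^ (L + 1) • u = 0}, AddCircle.finite_torsion _ (by positivity),
    fun u => mem_dyadicPoints_of_two_pow_nsmul_eq_zero, ?_⟩
  have hlocal : ∀ u ∈ dyadicPoints \ {u | 2 ^ (L + 1) • u = 0}, ∃ m s, 2 ≤ m ∧ 2 ≤ s ∧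
      addOrderOf u = 2 ^ m ∧ addOrderOf (g u) = 2 ^ s ∧
      ∀ y, IsGammaParent (g u) (g y) ↔ IsGammaParent u y := by
    intro u hu
    obtain ⟨a, m, hm, ha, rfl⟩ := exists_hasDyadicLevel_of_mem_diff hu
    have hφa := hL a m (by omega) ha
    have hpar := isGammaParent_apply_iff g.injective hgφ ha (by omega) hφa
    obtain ⟨s, hs, hord, -⟩ := hφa
    exact ⟨m, s, by omega, hs, ha.addOrderOf_coe, hgφ a ▸ hord, hpar⟩
  intro u hu v hv
  obtain ⟨m, s, hm, hs, hu, hgu, hpu⟩ := hlocal u hu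
  obtain ⟨m', s', hm', hs', hv, hgv, hpv⟩ := hlocal v hv
  rw [gammaAdj_iff_of_addOrderOf hu hm hv hm', gammaAdj_iff_of_addOrderOf hgu hs hgv hs', hpu, hpv]
end
end

section
/- Let X be a type, let q, q' ∈ X be distinct, and let S ⊆ X with q, q' ∉ S. The R-linear endomorphism B of M determined on the basis by B(x_q) = x_{q'}, B(x_{q'}) = (1−t)·x_{q'} + t·x_q, B(x_p) = (1−t)·(x_{q'} − x_q) + x_p for p ∈ S, and B(x_p) = x_p for all other p, is an automorphism of M (it is bijective), and it preserves the augmentation: ε ∘ B = ε. -/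
noncomputable section

open LaurentPolynomial

/-- The ring `R = ℤ[t,t⁻¹]` of Laurent polynomials over `ℤ`. -/
abbrev RLaurent := LaurentPolynomial ℤ

/-- The variable `t` of `ℤ[t,t⁻¹]`. -/
def tvar : RLaurent := LaurentPolynomial.T 1

/-- Let `q ≠ q'` in `X` and `S ⊆ X` with `q, q' ∉ S`. The `R`-linear endomorphism `B` of the
free `R`-module `M = ⊕_{x∈X} R` determined on the canonical basis by `B(x_q) = x_{q'}`,
`B(x_{q'}) = (1−t)·x_{q'} + t·x_q`, `B(x_p) = (1−t)·(x_{q'} − x_q) + x_p` for `p ∈ S`, and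
`B(x_p) = x_p` otherwise, is an automorphism of `M` and preserves the augmentation
`ε : M → R` (the linear map sending every basis vector to `1`): `ε ∘ B = ε`. -/
theorem burau_infinite_aut {X : Type*} (q q' : X) (hqq' : q ≠ q')
    (S : Set X) (hq : q ∉ S) (hq' : q' ∉ S)
    (B : (X →₀ RLaurent) →ₗ[RLaurent] (X →₀ RLaurent))
    (hBq : B (Finsupp.single q 1) = Finsupp.single q' 1)
    (hBq' : B (Finsupp.single q' 1) =
      (1 - tvar) • Finsupp.single q' 1 + tvar • Finsupp.single q 1)
    (hBS : ∀ p ∈ S, B (Finsupp.single p 1) =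
      (1 - tvar) • (Finsupp.single q' 1 - Finsupp.single q 1) + Finsupp.single p 1)
    (hBo : ∀ p : X, p ≠ q → p ≠ q' → p ∉ S → B (Finsupp.single p 1) = Finsupp.single p 1)
    (ε : (X →₀ RLaurent) →ₗ[RLaurent] RLaurent)
    (hε : ∀ p : X, ε (Finsupp.single p 1) = 1) :
    Function.Bijective B ∧ ∀ m : X →₀ RLaurent, ε (B m) = ε m := by
  classical
  set u : RLaurent := LaurentPolynomial.T (-1) with hu
  have hut : u * tvar = 1 := by
    rw [hu, tvar, ← LaurentPolynomial.T_add]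
    norm_num
  let g : X → (X →₀ RLaurent) := fun p =>
    if p = q then u • Finsupp.single q' 1 + (1 - u) • Finsupp.single q 1
    else if p = q' then Finsupp.single q 1
    else if p ∈ S then
      (u - 1) • (Finsupp.single q' 1 - Finsupp.single q 1) + Finsupp.single p 1
    else Finsupp.single p 1
  let C : (X →₀ RLaurent) →ₗ[RLaurent] (X →₀ RLaurent) :=
    Finsupp.linearCombination _ g
  have hC : ∀ p, C (Finsupp.single p 1) = g p := fun p => by
    simp [C]
  have hCq : C (Finsupp.single q 1)
      = u • Finsupp.single q' 1 + (1 - u) • Finsupp.single q 1 := by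
    rw [hC]; simp only [g, if_pos rfl]
  have hCq' : C (Finsupp.single q' 1) = Finsupp.single q 1 := by
    rw [hC]; simp [g, Ne.symm hqq']
  have hCS : ∀ p ∈ S, C (Finsupp.single p 1)
      = (u - 1) • (Finsupp.single q' 1 - Finsupp.single q 1) + Finsupp.single p 1 := by
    intro p hpS
    have h1 : p ≠ q := fun h => hq (h ▸ hpS)
    have h2 : p ≠ q' := fun h => hq' (h ▸ hpS)
    rw [hC]; simp [g, h1, h2, hpS]
  have hCo : ∀ p : X, p ≠ q → p ≠ q' → p ∉ S →
      C (Finsupp.single p 1) = Finsupp.single p 1 := by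
    intro p h1 h2 h3
    rw [hC]; simp [g, h1, h2, h3]
  have hBC : ∀ p, B (C (Finsupp.single p 1)) = Finsupp.single p 1 := by
    intro p
    by_cases hpq : p = q
    · subst hpq
      rw [hCq, map_add, map_smul, map_smul, hBq, hBq']
      match_scalars <;>
        first
        | ring1
        | linear_combination (norm := ring1) hut
        | linear_combination (norm := ring1) -hut
    · by_cases hpq' : p = q'
      · subst hpq'
        rw [hCq', hBq]
      · by_cases hpS : p ∈ S
        · rw [hCS p hpS, map_add, map_smul, map_sub, hBq, hBq', hBS p hpS]
          match_scalars <;>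
        first
        | ring1
        | linear_combination (norm := ring1) hut
        | linear_combination (norm := ring1) -hut
        · rw [hCo p hpq hpq' hpS, hBo p hpq hpq' hpS]
  have hCB : ∀ p, C (B (Finsupp.single p 1)) = Finsupp.single p 1 := by
    intro p
    by_cases hpq : p = q
    · subst hpq
      rw [hBq, hCq']
    · by_cases hpq' : p = q'
      · subst hpq'
        rw [hBq', map_add, map_smul, map_smul, hCq, hCq']
        match_scalars <;>
        first
        | ring1
        | linear_combination (norm := ring1) hut
        | linear_combination (norm := ring1) -hut
      · by_cases hpS : p ∈ S
        · rw [hBS p hpS, map_add, map_smul, map_sub, hCq, hCq', hCS p hpS]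
          match_scalars <;>
        first
        | ring1
        | linear_combination (norm := ring1) hut
        | linear_combination (norm := ring1) -hut
        · rw [hBo p hpq hpq' hpS, hCo p hpq hpq' hpS]
  have hBC' : B.comp C = LinearMap.id := by
    apply Finsupp.lhom_ext'
    intro p
    apply LinearMap.ext_ring
    simpa using hBC p
  have hCB' : C.comp B = LinearMap.id := by
    apply Finsupp.lhom_ext'
    intro p
    apply LinearMap.ext_ring
    simpa using hCB p
  have hleft : Function.LeftInverse C B := fun m => LinearMap.congr_fun hCB' m
  have hright : Function.RightInverse C B := fun m => LinearMap.congr_fun hBC' m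
  refine ⟨⟨hleft.injective, hright.surjective⟩, ?_⟩
  have hεB : ε.comp B = ε := by
    apply Finsupp.lhom_ext'
    intro p
    apply LinearMap.ext_ring
    simp only [LinearMap.comp_apply, Finsupp.lsingle_apply]
    by_cases hpq : p = q
    · subst hpq; rw [hBq, hε, hε]
    · by_cases hpq' : p = q'
      · subst hpq'
        rw [hBq', map_add, map_smul, map_smul, hε, hε]
        simp [smul_eq_mul]
      · by_cases hpS : p ∈ S
        · rw [hBS p hpS, map_add, map_smul, map_sub, hε, hε, hε]
          simp
        · rw [hBo p hpq hpq' hpS]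
  exact fun m => LinearMap.congr_fun hεB m
end
end
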